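/- arXiv:1702.01492 — 3 statements merged into one kernel-verified Lean document; each statement's English description precedes it below -/
import Mathlib

section
/- A weighted digraph is weight-balanced (every node's weighted in-degree equals its weighted out-degree) if and only if L + Lᵀ is positive semidefinite, where L is the in-degree Laplacian. -/
open Matrix

/-!
With row sums `r` and column sums `c` of `A`, the Laplacian `L = diag r - A` satisfies
`L 1 = 0`, `1ᵀ L = (r - c)ᵀ` and
`2 xᵀ L x = ∑ᵢⱼ aᵢⱼ (xᵢ - xⱼ)² + ∑ᵢ (rᵢ - cᵢ) xᵢ²`.
If `r = c` the quadratic form of `L + Lᵀ` is a sum of squares with nonnegative weights.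
Conversely, if `L + Lᵀ` is positive semidefinite then `1ᵀ (L + Lᵀ) 1 = 2 · 1ᵀ L 1 = 0` forces
`(L + Lᵀ) 1 = 0`, and `(L + Lᵀ) 1 = r - c`.
-/

namespace Matrix

variable {ι R : Type*} [Fintype ι]

theorem dotProduct_add_transpose_mulVec [CommSemiring R] (M : Matrix ι ι R) (x : ι → R) :
    x ⬝ᵥ (M + Mᵀ) *ᵥ x = 2 * (x ⬝ᵥ M *ᵥ x) := by
  rw [add_mulVec, dotProduct_add, dotProduct_transpose_mulVec, two_mul]

theorem posSemidef_add_transpose_iff (M : Matrix ι ι ℝ) :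
    (M + Mᵀ).PosSemidef ↔ ∀ x, 0 ≤ x ⬝ᵥ M *ᵥ x := by
  have hsymm : (M + Mᵀ).IsHermitian := isHermitian_iff_isSymm.mpr (isSymm_add_transpose_self M)
  simp only [posSemidef_iff_dotProduct_mulVec, hsymm, true_and, star_trivial,
    dotProduct_add_transpose_mulVec]
  exact forall_congr' fun x => mul_nonneg_iff_of_pos_left two_pos

theorem vecMul_eq_zero_of_posSemidef_add_transpose {M : Matrix ι ι ℝ}
    (hM : (M + Mᵀ).PosSemidef) {v : ι → ℝ} (hv : M *ᵥ v = 0) : v ᵥ* M = 0 := by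
  have hform : star v ⬝ᵥ (M + Mᵀ) *ᵥ v = 0 := by
    rw [star_trivial, dotProduct_add_transpose_mulVec, hv, dotProduct_zero, mul_zero]
  have hker := (hM.dotProduct_mulVec_zero_iff v).mp hform
  rwa [add_mulVec, hv, zero_add, mulVec_transpose] at hker

variable [DecidableEq ι]

def inDegreeLaplacian [AddCommGroup R] (A : Matrix ι ι R) : Matrix ι ι R :=
  diagonal (fun i => ∑ j, A i j) - A

theorem inDegreeLaplacian_mulVec_one [CommRing R] (A : Matrix ι ι R) :
    inDegreeLaplacian A *ᵥ 1 = 0 := by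
  ext i
  simp [inDegreeLaplacian, mulVec, dotProduct, diagonal_apply]

theorem one_vecMul_inDegreeLaplacian [CommRing R] (A : Matrix ι ι R) :
    1 ᵥ* inDegreeLaplacian A = fun i => ∑ j, A i j - ∑ j, A j i := by
  ext i
  simp [inDegreeLaplacian, vecMul, dotProduct, diagonal_apply]

theorem two_mul_dotProduct_inDegreeLaplacian_mulVec [CommRing R] (A : Matrix ι ι R)
    (x : ι → R) :
    2 * (x ⬝ᵥ inDegreeLaplacian A *ᵥ x) =
      ∑ i, ∑ j, A i j * (x i - x j) ^ 2 + ∑ i, (∑ j, A i j - ∑ j, A j i) * x i ^ 2 := by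
  have hform : x ⬝ᵥ inDegreeLaplacian A *ᵥ x = ∑ i, ∑ j, A i j * (x i ^ 2 - x i * x j) := by
    rw [inDegreeLaplacian, sub_mulVec, dotProduct_sub]
    simp only [dotProduct, mulVec_diagonal]
    simp only [mulVec, dotProduct, Finset.sum_mul, Finset.mul_sum, ← Finset.sum_sub_distrib]
    exact Finset.sum_congr rfl fun i _ => Finset.sum_congr rfl fun j _ => by ring
  calc 2 * (x ⬝ᵥ inDegreeLaplacian A *ᵥ x)
      = ∑ i, ∑ j, (A i j * (x i - x j) ^ 2 + A i j * x i ^ 2 - A i j * x j ^ 2) := by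
        rw [hform, Finset.mul_sum]
        refine Finset.sum_congr rfl fun i _ => ?_
        rw [Finset.mul_sum]
        exact Finset.sum_congr rfl fun j _ => by ring
    _ = ∑ i, ∑ j, A i j * (x i - x j) ^ 2 + ∑ i, ∑ j, A i j * x i ^ 2
          - ∑ i, ∑ j, A j i * x i ^ 2 := by
        simp only [Finset.sum_add_distrib, Finset.sum_sub_distrib]
        rw [Finset.sum_comm (f := fun i j => A i j * x j ^ 2)]
    _ = _ := by
        simp only [sub_mul, Finset.sum_mul, Finset.sum_sub_distrib, add_sub_assoc]

end Matrix

theorem weight_balanced_iff_laplacian_psd_general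
    (N : ℕ) (A : Matrix (Fin N) (Fin N) ℝ)
    (hA : ∀ i j, 0 ≤ A i j)
    (L : Matrix (Fin N) (Fin N) ℝ)
    (hL : L = Matrix.diagonal (fun i => ∑ j, A i j) - A) :
    (∀ i, ∑ j, A i j = ∑ j, A j i) ↔ (L + Lᵀ).PosSemidef := by
  obtain rfl : L = inDegreeLaplacian A := hL
  constructor
  · intro hbal
    refine (posSemidef_add_transpose_iff _).mpr fun x => ?_
    have hdefect : ∑ i, (∑ j, A i j - ∑ j, A j i) * x i ^ 2 = 0 :=
      Finset.sum_eq_zero fun i _ => by rw [hbal i, sub_self, zero_mul]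
    have hsquares : 0 ≤ ∑ i, ∑ j, A i j * (x i - x j) ^ 2 :=
      Finset.sum_nonneg fun i _ => Finset.sum_nonneg fun j _ => mul_nonneg (hA i j) (sq_nonneg _)
    linarith [two_mul_dotProduct_inDegreeLaplacian_mulVec A x]
  · intro hpsd i
    have hcol := congrFun (vecMul_eq_zero_of_posSemidef_add_transpose hpsd
      (inDegreeLaplacian_mulVec_one A)) i
    rw [one_vecMul_inDegreeLaplacian] at hcol
    exact sub_eq_zero.mp hcol

/-- A weighted digraph (adjacency matrix `A` with nonnegative weights and zero
diagonal) is weight-balanced iff `L + Lᵀ` is positive semidefinite, where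
`L = D_in - A` is the in-degree Laplacian. -/
theorem weight_balanced_iff_laplacian_psd
    (N : ℕ) (A : Matrix (Fin N) (Fin N) ℝ)
    (hA : ∀ i j, 0 ≤ A i j) (hdiag : ∀ i, A i i = 0)
    (L : Matrix (Fin N) (Fin N) ℝ)
    (hL : L = Matrix.diagonal (fun i => ∑ j, A i j) - A) :
    (∀ i, ∑ j, A i j = ∑ j, A j i) ↔ (L + Lᵀ).PosSemidef :=
  weight_balanced_iff_laplacian_psd_general N A hA L hL
end

section
/- Let H be symmetric with H ⪰ c₀I (c₀ > 0) and L with L + Lᵀ positive semidefinite, ε > 0. Then every eigenvalue η of (H + ε⁻¹HLH)⁻¹ satisfies |η| ≤ c₀⁻¹, i.e., the spectral radius of (H + ε⁻¹HLH)⁻¹ is at most c₀⁻¹. -/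
/-!
With `M = H + ε⁻¹ H L H`, the symmetric part `M + Mᵀ = 2 (H - c₀ I) + 2 c₀ I + ε⁻¹ H (L + Lᵀ) H`
is `⪰ 2 c₀ I`, so for every complex eigenpair `M v = μ v` we get
`Re μ · v*v = Re (v* M v) ≥ c₀ · v*v`, hence `‖μ‖ ≥ Re μ ≥ c₀`. In particular `M` is invertible,
and the eigenvalues of `M⁻¹` are the inverses `μ⁻¹`, of norm at most `c₀⁻¹`.
-/

open Matrix
open scoped ComplexOrder

variable {n : Type*} [Fintype n]

theorem Matrix.map_inv_of_ringHom [DecidableEq n] {K L : Type*} [Field K] [Field L]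
    (f : K →+* L) (M : Matrix n n K) : M⁻¹.map f = (M.map f)⁻¹ := by
  have hdet : (M.map f).det = f M.det := (f.map_det M).symm
  have hadj : (M.map f).adjugate = M.adjugate.map f := (f.map_adjugate M).symm
  ext i j
  simp [inv_def, hdet, hadj, Ring.inverse_eq_inv']

theorem Matrix.exists_mulVec_eq_smul_of_mem_spectrum [DecidableEq n] {K : Type*} [Field K]
    {A : Matrix n n K} {μ : K} (hμ : μ ∈ spectrum K A) : ∃ v ≠ 0, A *ᵥ v = μ • v := by
  rw [← spectrum_toLin', ← Module.End.hasEigenvalue_iff_mem_spectrum] at hμ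
  obtain ⟨v, hv⟩ := hμ.exists_hasEigenvector
  exact ⟨v, hv.2, by simpa using hv.apply_eq_smul⟩

section Coercive

variable [DecidableEq n] {𝕜 : Type*} [RCLike 𝕜] {A : Matrix n n 𝕜} {c : ℝ}

theorem mul_re_dotProduct_le_re_dotProduct_mulVec (hA : (A + Aᴴ - (2 * c) • 1).PosSemidef)
    (v : n → 𝕜) : c * RCLike.re (star v ⬝ᵥ v) ≤ RCLike.re (star v ⬝ᵥ A *ᵥ v) := by
  have h := (RCLike.nonneg_iff.mp (hA.dotProduct_mulVec_nonneg v)).1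
  have hadj : star v ⬝ᵥ Aᴴ *ᵥ v = star (star v ⬝ᵥ A *ᵥ v) := by
    rw [star_dotProduct, star_mulVec, conjTranspose_conjTranspose, ← dotProduct_mulVec]
  rw [sub_mulVec, add_mulVec, smul_mulVec, one_mulVec, dotProduct_sub, dotProduct_add,
    dotProduct_smul, hadj] at h
  simp only [map_sub, map_add, RCLike.star_def, RCLike.conj_re, RCLike.smul_re] at h
  linarith

variable (hA : ∀ v : n → 𝕜, c * RCLike.re (star v ⬝ᵥ v) ≤ RCLike.re (star v ⬝ᵥ A *ᵥ v))
include hA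

theorem le_re_of_mem_spectrum {μ : 𝕜} (hμ : μ ∈ spectrum 𝕜 A) : c ≤ RCLike.re μ := by
  obtain ⟨v, hv, hAv⟩ := exists_mulVec_eq_smul_of_mem_spectrum hμ
  obtain ⟨hpos, hreal⟩ := RCLike.pos_iff.mp (dotProduct_star_self_pos_iff.mpr hv)
  have h := hA v
  rw [hAv, dotProduct_smul, smul_eq_mul, RCLike.mul_re, hreal, mul_zero, sub_zero] at h
  exact le_of_mul_le_mul_right h hpos

theorem norm_le_inv_of_mem_spectrum_inv (hc : 0 < c) {η : 𝕜} (hη : η ∈ spectrum 𝕜 A⁻¹) :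
    ‖η‖ ≤ c⁻¹ := by
  have hunit : IsUnit A := spectrum.isUnit_of_zero_notMem 𝕜 fun h0 ↦ by
    simpa using (le_re_of_mem_spectrum hA h0).trans_lt' hc
  rw [← hunit.unit_spec, ← coe_units_inv, ← spectrum.map_inv, Set.mem_inv] at hη
  have h : c ≤ ‖η‖⁻¹ := by
    simpa using (le_re_of_mem_spectrum hA hη).trans (RCLike.re_le_norm η⁻¹)
  have hη0 : 0 < ‖η‖ := inv_pos.mp (hc.trans_le h)
  exact (le_inv_comm₀ hc hη0).mp h

end Coercive

theorem Matrix.PosSemidef.map_ofReal [DecidableEq n] {S : Matrix n n ℝ} (hS : S.PosSemidef) :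
    (S.map Complex.ofReal).PosSemidef := by
  open scoped MatrixOrder in
  obtain ⟨B, rfl⟩ : ∃ B : Matrix n n ℝ, S = star B * B :=
    CStarAlgebra.nonneg_iff_eq_star_mul_self.mp hS.nonneg
  have : (star B * B).map Complex.ofReal = (B.map Complex.ofReal)ᴴ * B.map Complex.ofReal := by
    ext i j
    simp [mul_apply]
  rw [this]
  exact posSemidef_conjTranspose_mul_self _

theorem Matrix.PosSemidef.map_ofReal_add_conjTranspose_sub_smul_one [DecidableEq n]
    {M : Matrix n n ℝ} {r : ℝ} (h : (M + Mᵀ - r • 1).PosSemidef) :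
    (M.map Complex.ofReal + (M.map Complex.ofReal)ᴴ - r • 1).PosSemidef := by
  convert h.map_ofReal using 1
  ext i j
  by_cases hij : i = j <;> simp [hij]

theorem posSemidef_add_transpose_sub_smul_one [DecidableEq n] {H L : Matrix n n ℝ} {c t : ℝ}
    (hH : H.IsSymm) (hHc : (H - c • 1).PosSemidef) (hL : (L + Lᵀ).PosSemidef) (ht : 0 ≤ t) :
    (H + t • (H * L * H) + (H + t • (H * L * H))ᵀ - (2 * c) • 1).PosSemidef := by
  have hdecomp : H + t • (H * L * H) + (H + t • (H * L * H))ᵀ - (2 * c) • 1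
      = (2 : ℝ) • (H - c • 1) + t • (Hᴴ * (L + Lᵀ) * H) := by
    rw [conjTranspose_eq_transpose_of_trivial, hH.eq]
    simp only [transpose_add, transpose_smul, transpose_mul, hH.eq, mul_add, add_mul, smul_sub,
      smul_add, smul_smul, mul_assoc]
    module
  rw [hdecomp]
  exact (hHc.smul zero_le_two).add ((hL.conjTranspose_mul_mul_same H).smul ht)

/-- With `H` symmetric, `H ⪰ c₀ I` (`c₀ > 0`), `L + Lᵀ ⪰ 0` and `ε > 0`,
every eigenvalue `η` of `(H + ε⁻¹ H L H)⁻¹` satisfies `|η| ≤ c₀⁻¹`, i.e. the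
spectral radius of `(H + ε⁻¹ H L H)⁻¹` is at most `c₀⁻¹`. -/
theorem spectral_radius_bound_inverse
    (m : ℕ) (H L : Matrix (Fin m) (Fin m) ℝ) (c₀ : ℝ) (hc₀ : 0 < c₀)
    (hHsymm : H.IsSymm)
    (hHc : (H - c₀ • (1 : Matrix (Fin m) (Fin m) ℝ)).PosSemidef)
    (hL : (L + Lᵀ).PosSemidef) (ε : ℝ) (hε : 0 < ε) :
    ∀ η ∈ spectrum ℂ (((H + ε⁻¹ • (H * L * H))⁻¹).map (Complex.ofReal)),
      ‖η‖ ≤ c₀⁻¹ := by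
  intro η hη
  set M := H + ε⁻¹ • (H * L * H)
  have hM : (M.map Complex.ofReal + (M.map Complex.ofReal)ᴴ - (2 * c₀) • 1).PosSemidef :=
    (posSemidef_add_transpose_sub_smul_one hHsymm hHc hL
      (inv_nonneg.2 hε.le)).map_ofReal_add_conjTranspose_sub_smul_one
  rw [show M⁻¹.map Complex.ofReal = (M.map Complex.ofReal)⁻¹ from
    M.map_inv_of_ringHom Complex.ofRealHom] at hη
  exact norm_le_inv_of_mem_spectrum_inv (mul_re_dotProduct_le_re_dotProduct_mulVec hM) hc₀ hη
end

section
/- Suppose f : ℝ^{nN} → ℝ is strongly convex and differentiable, L ∈ ℝ^{N×N} satisfies L + Lᵀ positive semidefinite, and ε > 0. If (x, λ) and (x', λ') both satisfy 0 = ∇f(x) + λ and 0 = -ε(x - b) + (L ⊗ I_n)λ, then x = x' and λ = λ'. (Uniqueness of the algorithm equilibrium.) -/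
/-!
Subtracting the two equilibria gives `g x - g x' = -(λ - λ')` and `ε (x - x') = (L ⊗ I)(λ - λ')`,
so `ε ⟪g x - g x', x - x'⟫ = -(λ - λ')ᵀ (L ⊗ I) (λ - λ') ≤ 0`, because the symmetric part of
`L ⊗ I` is `(L + Lᵀ) ⊗ I ⪰ 0`. Strong convexity makes the gradient strongly monotone,
`c₀ ‖x - x'‖² ≤ ⟪g x - g x', x - x'⟫`, hence `x = x'`, and then `λ = λ'`.
-/

open Matrix
open scoped Kronecker InnerProductSpace

section Convex

variable {E : Type*} [NormedAddCommGroup E] [InnerProductSpace ℝ E]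

theorem strongConvexOn_univ_of_forall_mem_Ioo {f : E → ℝ} {m : ℝ}
    (hf : ∀ x y : E, ∀ t ∈ Set.Ioo (0 : ℝ) 1,
      f (t • x + (1 - t) • y) ≤ t * f x + (1 - t) * f y - m / 2 * (t * (1 - t)) * ‖x - y‖ ^ 2) :
    StrongConvexOn Set.univ m f := by
  refine ⟨convex_univ, fun x _ y _ a b ha hb hab => ?_⟩
  obtain rfl : b = 1 - a := by linarith
  rcases ha.eq_or_lt with rfl | ha
  · simp
  rcases hb.eq_or_lt with hb | hb
  · obtain rfl : a = 1 := by linarith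
    simp
  linear_combination hf x y a ⟨ha, by linarith⟩

theorem ConvexOn.le_sub_of_hasFDerivAt {f : E → ℝ} (hf : ConvexOn ℝ Set.univ f)
    {f' : E →L[ℝ] ℝ} {x y : E} (hy : HasFDerivAt f f' y) : f' (x - y) ≤ f x - f y := by
  let ℓ : ℝ →ᵃ[ℝ] E := AffineMap.lineMap y x
  have hderiv : HasDerivAt (f ∘ ℓ) (f' (x - y)) 0 :=
    HasFDerivAt.comp_hasDerivAt _ (by simpa [ℓ] using hy) AffineMap.hasDerivAt_lineMap
  simpa [slope, ℓ] using (hf.comp_affineMap ℓ).le_slope_of_hasDerivAt (Set.mem_univ 0)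
    (Set.mem_univ 1) zero_lt_one hderiv

variable [CompleteSpace E]

theorem StrongConvexOn.inner_add_le_sub_of_hasGradientAt {f : E → ℝ} {m : ℝ}
    (hf : StrongConvexOn Set.univ m f) {g x y : E} (hy : HasGradientAt f g y) :
    ⟪g, x - y⟫_ℝ + m / 2 * ‖x - y‖ ^ 2 ≤ f x - f y := by
  -- `f - m/2 ‖·‖²` is convex, with derivative `⟪g, ·⟫ - m ⟪y, ·⟫` at `y`.
  have h := (strongConvexOn_iff_convex.mp hf).le_sub_of_hasFDerivAt (x := x)
    (hy.hasFDerivAt.sub ((hasStrictFDerivAt_norm_sq y).hasFDerivAt.const_mul (m / 2)))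
  have hnorm := norm_add_sq_real (x - y) y
  rw [sub_add_cancel, real_inner_comm] at hnorm
  simp only [_root_.sub_apply, InnerProductSpace.toDual_apply_apply, _root_.smul_apply,
    coe_innerSL_apply, nsmul_eq_mul, Nat.cast_ofNat, smul_eq_mul] at h
  linear_combination h - m / 2 * hnorm

theorem StrongConvexOn.mul_norm_sq_le_inner_sub_of_hasGradientAt {f : E → ℝ} {m : ℝ}
    (hf : StrongConvexOn Set.univ m f) {gx gy x y : E} (hx : HasGradientAt f gx x)
    (hy : HasGradientAt f gy y) : m * ‖x - y‖ ^ 2 ≤ ⟪gx - gy, x - y⟫_ℝ := by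
  have h₁ := hf.inner_add_le_sub_of_hasGradientAt (x := x) hy
  have h₂ := hf.inner_add_le_sub_of_hasGradientAt (x := y) hx
  rw [norm_sub_rev, ← neg_sub x y, inner_neg_right] at h₂
  rw [inner_sub_left]
  linarith

end Convex

namespace Matrix

theorem dotProduct_mulVec_nonneg_of_posSemidef_add_transpose {ι : Type*} [Fintype ι]
    {L : Matrix ι ι ℝ} (hL : (L + Lᵀ).PosSemidef) (v : ι → ℝ) : 0 ≤ v ⬝ᵥ (L *ᵥ v) := by
  have h := hL.dotProduct_mulVec_nonneg v
  rw [star_trivial, add_mulVec, dotProduct_add, mulVec_transpose, dotProduct_comm v (v ᵥ* L),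
    ← dotProduct_mulVec] at h
  linarith

theorem kronecker_one_mulVec_apply {R ι κ : Type*} [NonAssocSemiring R] [Fintype ι] [Fintype κ]
    [DecidableEq κ] (L : Matrix ι ι R) (v : ι × κ → R) (i : ι) (k : κ) :
    (L ⊗ₖ (1 : Matrix κ κ R) *ᵥ v) (i, k) = ∑ j, L i j * v (j, k) := by
  simp [mulVec, dotProduct, Fintype.sum_prod_type, one_apply]

theorem posSemidef_kronecker_one_add_transpose {ι κ : Type*} [Fintype ι] [Fintype κ]
    [DecidableEq κ] {L : Matrix ι ι ℝ} (hL : (L + Lᵀ).PosSemidef) :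
    (L ⊗ₖ (1 : Matrix κ κ ℝ) + (L ⊗ₖ (1 : Matrix κ κ ℝ))ᵀ).PosSemidef := by
  have hKt : (L ⊗ₖ (1 : Matrix κ κ ℝ))ᵀ = Lᵀ ⊗ₖ 1 := by
    simpa using (kroneckerMap_transpose (· * ·) L (1 : Matrix κ κ ℝ)).symm
  rw [hKt, ← add_kronecker]
  exact hL.kronecker PosSemidef.one

end Matrix

/-- Uniqueness of the algorithm equilibrium: if `f` is strongly convex
differentiable (gradient `g`), `L + Lᵀ ⪰ 0`, `ε > 0`, and both `(x, λ)` and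
`(x', λ')` satisfy `0 = ∇f(x) + λ`, `0 = -ε(x - b) + (L ⊗ I_n)λ`, then
`x = x'` and `λ = λ'`. -/
theorem equilibrium_unique
    (n N : ℕ) (f : EuclideanSpace ℝ (Fin N × Fin n) → ℝ) (c₀ : ℝ) (hc₀ : 0 < c₀)
    (hconv : ∀ z₁ z₂ : EuclideanSpace ℝ (Fin N × Fin n), ∀ t : ℝ, t ∈ Set.Ioo (0:ℝ) 1 →
      f (t • z₁ + (1 - t) • z₂) ≤ t * f z₁ + (1 - t) * f z₂
        - c₀ / 2 * (t * (1 - t)) * ‖z₁ - z₂‖ ^ 2)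
    (g : EuclideanSpace ℝ (Fin N × Fin n) → EuclideanSpace ℝ (Fin N × Fin n))
    (hg : ∀ x, HasGradientAt f (g x) x)
    (L : Matrix (Fin N) (Fin N) ℝ) (hL : (L + Lᵀ).PosSemidef)
    (ε : ℝ) (hε : 0 < ε) (b : EuclideanSpace ℝ (Fin N × Fin n))
    (x lam x' lam' : EuclideanSpace ℝ (Fin N × Fin n))
    (heq1 : ∀ p : Fin N × Fin n, 0 = g x p + lam p)
    (heq2 : ∀ p : Fin N × Fin n,
      0 = -ε * (x p - b p) + ∑ j, L p.1 j * lam (j, p.2))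
    (heq1' : ∀ p : Fin N × Fin n, 0 = g x' p + lam' p)
    (heq2' : ∀ p : Fin N × Fin n,
      0 = -ε * (x' p - b p) + ∑ j, L p.1 j * lam' (j, p.2)) :
    x = x' ∧ lam = lam' := by
  set K : Matrix (Fin N × Fin n) (Fin N × Fin n) ℝ := L ⊗ₖ 1
  have hdual : g x - g x' = -(lam - lam') := by
    ext p
    simp only [PiLp.sub_apply, PiLp.neg_apply]
    linarith [heq1 p, heq1' p]
  have hprimal : WithLp.ofLp (ε • (x - x')) = K *ᵥ WithLp.ofLp (lam - lam') := by
    ext ⟨i, k⟩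
    simp only [K, kronecker_one_mulVec_apply, WithLp.ofLp_smul, WithLp.ofLp_sub, Pi.smul_apply,
      Pi.sub_apply, smul_eq_mul, mul_sub, Finset.sum_sub_distrib]
    linarith [heq2 (i, k), heq2' (i, k)]
  have hcoupling : 0 ≤ ε * ⟪lam - lam', x - x'⟫_ℝ := by
    rw [← inner_smul_right, EuclideanSpace.inner_eq_star_dotProduct, hprimal, star_trivial,
      dotProduct_comm]
    exact dotProduct_mulVec_nonneg_of_posSemidef_add_transpose
      (posSemidef_kronecker_one_add_transpose hL) _
  have hmono := StrongConvexOn.mul_norm_sq_le_inner_sub_of_hasGradientAt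
    (strongConvexOn_univ_of_forall_mem_Ioo hconv) (hg x) (hg x')
  rw [hdual, inner_neg_left] at hmono
  have hx : x = x' := by
    have hsq : ‖x - x'‖ ^ 2 ≤ 0 := by nlinarith [nonneg_of_mul_nonneg_right hcoupling hε]
    simpa [sub_eq_zero] using hsq
  subst hx
  rw [sub_self, eq_comm, neg_eq_zero, sub_eq_zero] at hdual
  exact ⟨rfl, hdual⟩
end
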